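/- arXiv:1012.5568 — 5 statements merged into one kernel-verified Lean document; each statement's English description precedes it below -/
import Mathlib

section
/- Let X ⊆ ℝⁿ be convex, f : ℝⁿ → ℝ convex, g : ℝⁿ → ℝ^m with each component convex, and suppose there exists x₀ ∈ X with g(x₀) < 0 (strict componentwise, Slater's condition). If the primal infimum μ = inf { f(x) : x ∈ X, g(x) ≤ 0 } is finite, then there exists v ≥ 0 in ℝ^m such that inf_{x ∈ X} [ f(x) + Σⱼ vⱼ gⱼ(x) ] = μ; i.e., the duality gap is zero and the dual maximum is attained. -/
private lemma comb_lt_aux {a b p q r s : ℝ} (ha : 0 ≤ a) (hb : 0 ≤ b) (hab : a + b = 1)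
    (h1 : p < r) (h2 : q < s) : a * p + b * q < a * r + b * s := by
  rcases eq_or_lt_of_le ha with h | h
  · have hb1 : b = 1 := by linarith
    simp [← h, hb1]; linarith
  · have h3 : a * p < a * r := by nlinarith
    have h4 : b * q ≤ b * s := by nlinarith
    linarith

/-- Slater strong duality with dual attainment: for a convex program with
Slater's condition and finite primal infimum `μ`, there is a dual multiplier
`v ≥ 0` whose Lagrangian infimum equals `μ`. -/
theorem slater_strong_duality_attained
    (n m : ℕ)
    (X : Set (Fin n → ℝ)) (hX : Convex ℝ X)
    (f : (Fin n → ℝ) → ℝ) (hf : ConvexOn ℝ Set.univ f)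
    (g : (Fin n → ℝ) → Fin m → ℝ)
    (hg : ∀ j, ConvexOn ℝ Set.univ (fun x => g x j))
    (x₀ : Fin n → ℝ) (hx₀X : x₀ ∈ X) (hx₀ : ∀ j, g x₀ j < 0)
    (μ : ℝ)
    (hμ : IsGLB {r : ℝ | ∃ x ∈ X, (∀ j, g x j ≤ 0) ∧ r = f x} μ) :
    ∃ v : Fin m → ℝ, (∀ j, 0 ≤ v j) ∧
      IsGLB {r : ℝ | ∃ x ∈ X, r = f x + ∑ j, v j * g x j} μ := by
  classical
  set S : Set ((Fin m → ℝ) × ℝ) :=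
    {p | ∃ x ∈ X, (∀ j, g x j < p.1 j) ∧ f x < p.2} with hSdef
  -- S is open
  have hSopen : IsOpen S := by
    have : S = ⋃ x ∈ X,
        ((⋂ j, {p : (Fin m → ℝ) × ℝ | g x j < p.1 j}) ∩ {p | f x < p.2}) := by
      ext p
      simp only [hSdef, Set.mem_setOf_eq, Set.mem_iUnion, Set.mem_inter_iff,
        Set.mem_iInter]
      tauto
    rw [this]
    refine isOpen_biUnion fun x _ => IsOpen.inter ?_ ?_
    · exact isOpen_iInter_of_finite fun j =>
        isOpen_lt continuous_const ((continuous_apply j).comp continuous_fst)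
    · exact isOpen_lt continuous_const continuous_snd
  -- S is convex
  have hSconv : Convex ℝ S := by
    rintro p ⟨x, hxX, hgx, hfx⟩ q ⟨y, hyX, hgy, hfy⟩ a b ha hb hab
    refine ⟨a • x + b • y, hX hxX hyX ha hb hab, fun j => ?_, ?_⟩
    · have h1 := (hg j).2 (Set.mem_univ x) (Set.mem_univ y) ha hb hab
      simp only [smul_eq_mul] at h1
      have h2 := comb_lt_aux ha hb hab (hgx j) (hgy j)
      have h3 : (a • p + b • q).1 j = a * p.1 j + b * q.1 j := by
        simp [Prod.fst_add, Prod.smul_fst]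
      rw [h3]
      exact lt_of_le_of_lt h1 h2
    · have h1 := hf.2 (Set.mem_univ x) (Set.mem_univ y) ha hb hab
      simp only [smul_eq_mul] at h1
      have h2 := comb_lt_aux ha hb hab hfx hfy
      have h3 : (a • p + b • q).2 = a * p.2 + b * q.2 := by
        simp [Prod.snd_add, Prod.smul_snd]
      rw [h3]
      exact lt_of_le_of_lt h1 h2
  -- (0, μ) is not in S
  have h0μ : ((0 : Fin m → ℝ), μ) ∉ S := by
    rintro ⟨x, hxX, hgx, hfx⟩
    have hmem : f x ∈ {r : ℝ | ∃ x ∈ X, (∀ j, g x j ≤ 0) ∧ r = f x} :=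
      ⟨x, hxX, fun j => le_of_lt (by simpa using hgx j), rfl⟩
    exact absurd (hμ.1 hmem) (not_le.2 hfx)
  obtain ⟨φ, hφ⟩ := geometric_hahn_banach_open_point hSconv hSopen h0μ
  set w : Fin m → ℝ := fun j => -(φ ((Pi.single j 1 : Fin m → ℝ), (0 : ℝ))) with hw
  set β : ℝ := -(φ ((0 : Fin m → ℝ), (1 : ℝ))) with hβ
  -- expansion of φ
  have hexp : ∀ (u : Fin m → ℝ) (t : ℝ),
      φ (u, t) = -(∑ j, w j * u j) - β * t := by
    intro u t
    have hdecomp : ((u, t) : (Fin m → ℝ) × ℝ) =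
        (∑ j, u j • (((Pi.single j 1 : Fin m → ℝ), (0 : ℝ)))) +
          t • (((0 : Fin m → ℝ)), (1 : ℝ)) := by
      rw [Prod.ext_iff]
      constructor
      · simp only [Prod.fst_add, Prod.fst_sum, Prod.smul_fst, Prod.smul_snd]
        rw [smul_zero, add_zero]
        funext i
        simp [Finset.sum_apply, Pi.single_apply, Finset.sum_ite_eq]
      · simp [Prod.snd_add, Prod.snd_sum]
    conv_lhs => rw [hdecomp]
    rw [map_add, map_sum]
    simp only [map_smul, smul_eq_mul]
    have h1 : ∀ j, w j * u j = -(u j * φ (Pi.single j 1, (0 : ℝ))) := fun j => by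
      simp only [hw]; ring
    rw [Finset.sum_congr rfl fun j _ => h1 j, Finset.sum_neg_distrib]
    simp only [hβ]
    ring
  have hφ0μ : φ ((0 : Fin m → ℝ), μ) = -(β * μ) := by
    rw [hexp]; simp
  -- key strict inequality on S
  have hkey : ∀ (u : Fin m → ℝ) (t : ℝ), ((u, t) : (Fin m → ℝ) × ℝ) ∈ S →
      β * μ < ∑ j, w j * u j + β * t := by
    intro u t hp
    have h := hφ _ hp
    rw [hφ0μ, hexp u t] at h
    linarith
  -- perturbed points lie in S
  have hkey2 : ∀ x ∈ X, ∀ ε : ℝ, 0 < ε →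
      β * μ < ∑ j, w j * (g x j + ε) + β * (f x + ε) := by
    intro x hx ε hε
    exact hkey _ _ ⟨x, hx, fun j => by
      show g x j < g x j + ε; linarith, by
      show f x < f x + ε; linarith⟩
  have hkey3 : ∀ x ∈ X, ∀ ε : ℝ, 0 < ε →
      β * μ < ∑ j, w j * g x j + ε * ∑ j, w j + β * (f x + ε) := by
    intro x hx ε hε
    have h := hkey2 x hx ε hε
    have hs : ∑ j, w j * (g x j + ε) = ∑ j, w j * g x j + ε * ∑ j, w j := by
      rw [Finset.mul_sum, ← Finset.sum_add_distrib]
      exact Finset.sum_congr rfl fun j _ => by ring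
    linarith
  -- nonnegativity of w
  have hwnn : ∀ j, 0 ≤ w j := by
    intro j
    by_contra hneg
    push_neg at hneg
    set C : ℝ := ∑ i ∈ Finset.univ.erase j, w i * (g x₀ i + 1) + β * (f x₀ + 1) with hC
    set M : ℝ := max (g x₀ j + 1) ((β * μ - C - 1) / w j) with hM
    set u : Fin m → ℝ := fun i => if i = j then M else g x₀ i + 1 with hu
    have hpS : ((u, f x₀ + 1) : (Fin m → ℝ) × ℝ) ∈ S := by
      refine ⟨x₀, hx₀X, fun i => ?_, by show f x₀ < f x₀ + 1; linarith⟩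
      show g x₀ i < u i
      by_cases hij : i = j
      · subst hij
        have h5 : g x₀ i + 1 ≤ M := le_max_left _ _
        simp only [hu]
        rw [if_pos trivial]
        linarith
      · simp only [hu]
        rw [if_neg hij]
        linarith
    have hks := hkey u (f x₀ + 1) hpS
    have hsum : ∑ i, w i * u i
        = w j * M + ∑ i ∈ Finset.univ.erase j, w i * (g x₀ i + 1) := by
      rw [← Finset.add_sum_erase _ (fun i => w i * u i) (Finset.mem_univ j)]
      congr 1
      · simp [hu]
      · exact Finset.sum_congr rfl fun i hi => by
          simp [hu, Finset.ne_of_mem_erase hi]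
    rw [hsum] at hks
    have hMle : (β * μ - C - 1) / w j ≤ M := le_max_right _ _
    have hwjM : w j * M ≤ β * μ - C - 1 := by
      have h := mul_le_mul_of_nonpos_left hMle (le_of_lt hneg)
      rwa [mul_div_cancel₀ _ (ne_of_lt hneg)] at h
    rw [hC] at hwjM
    linarith
  -- nonnegativity of β
  have hβnn : 0 ≤ β := by
    by_contra hneg
    push_neg at hneg
    set D : ℝ := ∑ i, w i * (g x₀ i + 1) with hD
    set t : ℝ := max (f x₀ + 1) ((β * μ - D - 1) / β) with ht
    have hpS : ((((fun i => g x₀ i + 1) : Fin m → ℝ), t) : (Fin m → ℝ) × ℝ) ∈ S := by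
      refine ⟨x₀, hx₀X, fun i => ?_, ?_⟩
      · show g x₀ i < g x₀ i + 1; linarith
      · show f x₀ < t
        have : f x₀ + 1 ≤ t := le_max_left _ _
        linarith
    have hks : β * μ < ∑ i, w i * (g x₀ i + 1) + β * t := hkey _ t hpS
    have htle : (β * μ - D - 1) / β ≤ t := le_max_right _ _
    have hβt : β * t ≤ β * μ - D - 1 := by
      have h := mul_le_mul_of_nonpos_left htle (le_of_lt hneg)
      rwa [mul_div_cancel₀ _ (ne_of_lt hneg)] at h
    rw [hD] at hβt
    linarith
  -- β is positive (Slater)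
  have hβpos : 0 < β := by
    rcases lt_or_eq_of_le hβnn with h | h
    · exact h
    · exfalso
      by_cases hw0 : ∀ j, w j = 0
      · have hks := hkey3 x₀ hx₀X 1 one_pos
        simp only [hw0, zero_mul, Finset.sum_const_zero, ← h] at hks
        linarith
      · push_neg at hw0
        obtain ⟨j, hj⟩ := hw0
        have hjpos : 0 < w j := lt_of_le_of_ne (hwnn j) (Ne.symm hj)
        set A : ℝ := ∑ i, w i * g x₀ i with hA
        set B : ℝ := ∑ i, w i with hB
        have hAneg : A < 0 := by
          rw [hA, ← Finset.add_sum_erase _ (fun i => w i * g x₀ i) (Finset.mem_univ j)]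
          have h1 : w j * g x₀ j < 0 := mul_neg_of_pos_of_neg hjpos (hx₀ j)
          have h2 : ∑ i ∈ Finset.univ.erase j, w i * g x₀ i ≤ 0 :=
            Finset.sum_nonpos fun i _ =>
              mul_nonpos_of_nonneg_of_nonpos (hwnn i) (le_of_lt (hx₀ i))
          linarith
        have hBpos : 0 < B := by
          have h1 : w j ≤ B := by
            rw [hB]
            exact Finset.single_le_sum (fun i _ => hwnn i) (Finset.mem_univ j)
          linarith
        have hεpos : 0 < -A / (2 * B) := div_pos (by linarith) (by linarith)
        have hks := hkey3 x₀ hx₀X (-A / (2 * B)) hεpos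
        rw [← h] at hks
        have hE : -A / (2 * B) * B = -A / 2 := by
          field_simp
        rw [hE] at hks
        simp only [zero_mul] at hks
        linarith
  clear_value S w β
  -- the multiplier
  refine ⟨fun j => w j / β, fun j => div_nonneg (hwnn j) (le_of_lt hβpos), ?_⟩
  have hLag : ∀ x ∈ X, μ ≤ f x + ∑ j, w j / β * g x j := by
    intro x hx
    have hge : β * μ ≤ ∑ j, w j * g x j + β * f x := by
      set c : ℝ := (∑ j, w j) + β with hc
      have hwsum : (0 : ℝ) ≤ ∑ j, w j := Finset.sum_nonneg fun i _ => hwnn i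
      have hcpos : 0 < c := by rw [hc]; linarith
      clear_value c
      refine le_of_forall_pos_le_add fun δ hδ => ?_
      have hks := hkey3 x hx (δ / c) (div_pos hδ hcpos)
      have hE : δ / c * (∑ j, w j) + β * (δ / c) = δ / c * c := by
        rw [hc]; ring
      have hE2 : δ / c * c = δ := div_mul_cancel₀ δ (ne_of_gt hcpos)
      have hE3 : β * (f x + δ / c) = β * f x + β * (δ / c) := by ring
      linarith [hks, hE, hE2, hE3]
    have h1 : ∑ j, w j / β * g x j = (∑ j, w j * g x j) / β := by
      rw [Finset.sum_div]
      exact Finset.sum_congr rfl fun j _ => div_mul_eq_mul_div _ _ _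
    have hEq : f x + ∑ j, w j / β * g x j = (∑ j, w j * g x j + β * f x) / β := by
      rw [h1, add_div, mul_div_cancel_left₀ _ (ne_of_gt hβpos)]
      ring
    rw [hEq, le_div_iff₀ hβpos]
    linarith
  constructor
  · rintro r ⟨x, hx, rfl⟩
    exact hLag x hx
  · intro b hb
    refine hμ.2 ?_
    rintro r ⟨x, hx, hgx, rfl⟩
    have hmem : f x + ∑ j, w j / β * g x j ∈
        {r : ℝ | ∃ x ∈ X, r = f x + ∑ j, w j / β * g x j} := ⟨x, hx, rfl⟩
    have hble := hb hmem
    have hnp : ∑ j, w j / β * g x j ≤ 0 :=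
      Finset.sum_nonpos fun j _ =>
        mul_nonpos_of_nonneg_of_nonpos (div_nonneg (hwnn j) (le_of_lt hβpos)) (hgx j)
    linarith
end

section
/- Let f, g and X be convex and suppose there exists x₀ ∈ X with g(x₀) < 0 (Slater's condition). If the primal value inf { f(x) : x ∈ X, g(x) ≤ 0 } is finite, then there is no Lagrangian duality gap between the primal convex program and its Lagrangian dual, that is, sup_{v ≥ 0} θ(v) = inf { f(x) : x ∈ X, g(x) ≤ 0 }, where θ is the Lagrangian dual function. -/
open Finset

private lemma combo_lt' {a b x x' y y' : ℝ} (ha : 0 ≤ a) (hb : 0 ≤ b)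
    (hab : a + b = 1) (hx : x < x') (hy : y < y') :
    a * x + b * y < a * x' + b * y' := by
  rcases ha.lt_or_eq with h | h
  · rcases hb.lt_or_eq with h' | h'
    · nlinarith
    · nlinarith
  · nlinarith

private lemma div_two_mul' {a b : ℝ} (hb : b ≠ 0) : a / (2 * b) * b = a / 2 := by
  field_simp

/-- Zero duality gap under Slater's condition: for a convex program with
constraint qualification and finite primal value, the supremum of the
Lagrangian dual objective equals the primal infimum (in the extended reals);
equivalently, the duality gap cannot be strictly positive. -/
theorem slater_zero_duality_gap
    (n m : ℕ)
    (X : Set (Fin n → ℝ)) (hX : Convex ℝ X)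
    (f : (Fin n → ℝ) → ℝ) (hf : ConvexOn ℝ Set.univ f)
    (g : (Fin n → ℝ) → Fin m → ℝ)
    (hg : ∀ j, ConvexOn ℝ Set.univ (fun x => g x j))
    (x₀ : Fin n → ℝ) (hx₀X : x₀ ∈ X) (hx₀ : ∀ j, g x₀ j < 0)
    (μ : ℝ)
    (hfinite : (⨅ x : Fin n → ℝ, ⨅ _ : x ∈ X ∧ ∀ j, g x j ≤ 0, (f x : EReal)) = (μ : EReal)) :
    (⨆ v : Fin m → ℝ, ⨆ _ : ∀ j, 0 ≤ v j,
        ⨅ x : Fin n → ℝ, ⨅ _ : x ∈ X, ((f x + ∑ j, v j * g x j : ℝ) : EReal))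
      = (⨅ x : Fin n → ℝ, ⨅ _ : x ∈ X ∧ ∀ j, g x j ≤ 0, (f x : EReal)) := by
  have hprimal_le : ∀ x, x ∈ X → (∀ j, g x j ≤ 0) → μ ≤ f x := by
    intro x hx hgx
    have h : (⨅ x : Fin n → ℝ, ⨅ _ : x ∈ X ∧ ∀ j, g x j ≤ 0, (f x : EReal)) ≤ (f x : EReal) :=
      iInf_le_of_le x (iInf_le _ ⟨hx, hgx⟩)
    rw [hfinite] at h
    exact_mod_cast h
  refine le_antisymm ?_ ?_
  · -- weak duality
    refine iSup_le fun v => iSup_le fun hv => le_iInf fun x => le_iInf fun hx => ?_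
    refine le_trans (iInf_le_of_le x (iInf_le _ hx.1)) ?_
    rw [EReal.coe_le_coe_iff]
    have : ∑ j, v j * g x j ≤ 0 :=
      Finset.sum_nonpos fun j _ => mul_nonpos_of_nonneg_of_nonpos (hv j) (hx.2 j)
    linarith
  · -- strong duality
    rw [hfinite]
    set A : Set ((Fin m → ℝ) × ℝ) :=
      {p | ∃ x ∈ X, (∀ j, g x j < p.1 j) ∧ f x < p.2} with hA
    have hAconv : Convex ℝ A := by
      rintro ⟨u, t⟩ ⟨x, hxX, hxu, hxt⟩ ⟨u', t'⟩ ⟨y, hyX, hyu, hyt⟩ a b ha hb hab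
      refine ⟨a • x + b • y, hX hxX hyX ha hb hab, fun j => ?_, ?_⟩
      · have h1 := (hg j).2 (Set.mem_univ x) (Set.mem_univ y) ha hb hab
        simp only [smul_eq_mul] at h1
        have h2 : a * g x j + b * g y j < a * u j + b * u' j :=
          combo_lt' ha hb hab (hxu j) (hyu j)
        simp only [Prod.smul_mk, Prod.mk_add_mk, Pi.add_apply, Pi.smul_apply, smul_eq_mul]
        linarith
      · have h1 := hf.2 (Set.mem_univ x) (Set.mem_univ y) ha hb hab
        simp only [smul_eq_mul] at h1
        have h2 : a * f x + b * f y < a * t + b * t' :=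
          combo_lt' ha hb hab hxt hyt
        simp only [Prod.smul_mk, Prod.mk_add_mk, smul_eq_mul]
        linarith
    have hAopen : IsOpen A := by
      have hrw : A = ⋃ x ∈ X,
          ((⋂ j, {p : (Fin m → ℝ) × ℝ | g x j < p.1 j}) ∩ {p | f x < p.2}) := by
        ext p
        simp only [hA, Set.mem_setOf_eq, Set.mem_iUnion, Set.mem_inter_iff, Set.mem_iInter]
        tauto
      rw [hrw]
      refine isOpen_biUnion fun x _ => IsOpen.inter (isOpen_iInter_of_finite fun j => ?_) ?_
      · exact isOpen_lt continuous_const ((continuous_apply j).comp continuous_fst)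
      · exact isOpen_lt continuous_const continuous_snd
    have hμA : ((0 : Fin m → ℝ), μ) ∉ A := by
      rintro ⟨x, hxX, hxg, hxf⟩
      have hxf' : f x < μ := hxf
      have := hprimal_le x hxX (fun j => le_of_lt (show g x j < 0 from hxg j))
      linarith
    obtain ⟨L, hL⟩ := geometric_hahn_banach_open_point hAconv hAopen hμA
    set c : ℝ := L ((0 : Fin m → ℝ), μ) with hc
    set av : Fin m → ℝ := fun j => L ((Pi.single j 1 : Fin m → ℝ), (0:ℝ)) with hav
    set α : ℝ := L ((0 : Fin m → ℝ), (1:ℝ)) with hα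
    -- decomposition of L
    have hdec : ∀ (u : Fin m → ℝ) (t : ℝ),
        L (u, t) = (∑ j, u j * av j) + t * α := by
      intro u t
      have hu : ((u, t) : (Fin m → ℝ) × ℝ)
          = (∑ j, u j • ((Pi.single j (1:ℝ) : Fin m → ℝ), (0:ℝ)))
            + t • ((0 : Fin m → ℝ), (1:ℝ)) := by
        have h1 : ∀ j : Fin m, u j • ((Pi.single j (1:ℝ) : Fin m → ℝ), (0:ℝ))
            = ((Pi.single j (u j) : Fin m → ℝ), (0:ℝ)) := fun j => by
          rw [Prod.smul_mk, ← Pi.single_smul, smul_eq_mul, mul_one, smul_zero]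
        rw [Finset.sum_congr rfl fun j _ => h1 j, Prod.ext_iff]
        constructor
        · rw [Prod.fst_add, Prod.fst_sum]
          simp [Finset.univ_sum_single]
        · rw [Prod.snd_add, Prod.snd_sum]
          simp
      rw [hu, map_add, map_sum, map_smul]
      simp only [map_smul, smul_eq_mul, hav, hα]
    -- ray lemma
    have hray : ∀ p d : (Fin m → ℝ) × ℝ, (∀ s : ℝ, 0 ≤ s → p + s • d ∈ A) → L d ≤ 0 := by
      intro p d hpd
      by_contra hpos
      push_neg at hpos
      set s : ℝ := max 0 ((c - L p) / L d + 1) with hs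
      have hs0 : 0 ≤ s := le_max_left _ _
      have h1 := hL _ (hpd s hs0)
      rw [map_add, map_smul, smul_eq_mul] at h1
      have h2 : (c - L p) / L d + 1 ≤ s := le_max_right _ _
      have h3 := mul_le_mul_of_nonneg_right h2 hpos.le
      rw [add_mul, div_mul_cancel₀ _ (ne_of_gt hpos), one_mul] at h3
      linarith
    -- base point
    set p₀ : (Fin m → ℝ) × ℝ := (fun j => g x₀ j / 2, f x₀ + 1) with hp₀def
    have hsingle_nonneg : ∀ (j i : Fin m), (0:ℝ) ≤ (Pi.single j (1:ℝ) : Fin m → ℝ) i := by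
      intro j i
      rcases eq_or_ne i j with h | h
      · subst h; simp
      · rw [Pi.single_eq_of_ne h]
    have hαle : α ≤ 0 := by
      apply hray p₀ ((0 : Fin m → ℝ), (1:ℝ))
      intro s hs
      refine ⟨x₀, hx₀X, fun j => ?_, ?_⟩
      · show g x₀ j < (p₀ + s • ((0 : Fin m → ℝ), (1:ℝ))).1 j
        rw [hp₀def]
        simp only [Prod.smul_mk, Prod.mk_add_mk, Pi.add_apply, Pi.smul_apply,
          Pi.zero_apply, smul_eq_mul, mul_zero, add_zero]
        have := hx₀ j; linarith
      · show f x₀ < (p₀ + s • ((0 : Fin m → ℝ), (1:ℝ))).2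
        rw [hp₀def]
        simp only [Prod.smul_mk, Prod.mk_add_mk, smul_eq_mul, mul_one]
        linarith
    have havle : ∀ j, av j ≤ 0 := by
      intro j
      apply hray p₀ (((Pi.single j 1 : Fin m → ℝ)), (0:ℝ))
      intro s hs
      refine ⟨x₀, hx₀X, fun i => ?_, ?_⟩
      · show g x₀ i < (p₀ + s • (((Pi.single j 1 : Fin m → ℝ)), (0:ℝ))).1 i
        rw [hp₀def]
        simp only [Prod.smul_mk, Prod.mk_add_mk, Pi.add_apply, Pi.smul_apply, smul_eq_mul]
        have h1 := hx₀ i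
        have h2 := mul_nonneg hs (hsingle_nonneg j i)
        linarith
      · show f x₀ < (p₀ + s • (((Pi.single j 1 : Fin m → ℝ)), (0:ℝ))).2
        rw [hp₀def]
        simp only [Prod.smul_mk, Prod.mk_add_mk, smul_eq_mul, mul_zero, add_zero]
        linarith
    have hc_eq : c = μ * α := by
      rw [hc, hdec]
      simp
    have hp₀A : p₀ ∈ A := by
      refine ⟨x₀, hx₀X, fun j => ?_, ?_⟩
      · show g x₀ j < p₀.1 j
        rw [hp₀def]
        have := hx₀ j; linarith
      · show f x₀ < p₀.2
        rw [hp₀def]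
        norm_num
    -- α is strictly negative
    have hαneg : α < 0 := by
      rcases hαle.lt_or_eq with h | h
      · exact h
      · exfalso
        have h1 : (∑ j, g x₀ j / 2 * av j) + (f x₀ + 1) * α < c := by
          have h0 := hL _ hp₀A
          rw [hp₀def, hdec] at h0
          exact h0
        have h2 : (0:ℝ) ≤ ∑ j, g x₀ j / 2 * av j :=
          Finset.sum_nonneg fun j _ => by
            have := mul_nonneg (neg_nonneg.mpr (show g x₀ j / 2 ≤ 0 by have := hx₀ j; linarith))
              (neg_nonneg.mpr (havle j))
            nlinarith
        rw [hc_eq, h, mul_zero, mul_zero, add_zero] at h1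
        linarith
    -- the dual multiplier
    set w : Fin m → ℝ := fun j => av j / α with hw
    have hwnonneg : ∀ j, 0 ≤ w j := by
      intro j
      rw [hw]
      rw [div_nonneg_iff]
      right
      exact ⟨havle j, hαneg.le⟩
    have hkey : ∀ x, x ∈ X → μ ≤ f x + ∑ j, w j * g x j := by
      intro x hx
      have hstep : ∀ ε : ℝ, 0 < ε →
          (∑ j, g x j * av j) + f x * α + ε * ((∑ j, av j) + α) < μ * α := by
        intro ε hε
        have hmem : ((fun j => g x j + ε, f x + ε) : (Fin m → ℝ) × ℝ) ∈ A :=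
          ⟨x, hx, fun j => by show g x j < g x j + ε; linarith, by show f x < f x + ε; linarith⟩
        have h1 : (∑ j, (g x j + ε) * av j) + (f x + ε) * α < c := by
          have h0 := hL _ hmem
          rw [hdec] at h0
          exact h0
        have h2 : ∑ j, (g x j + ε) * av j = (∑ j, g x j * av j) + ε * ∑ j, av j := by
          rw [Finset.mul_sum, ← Finset.sum_add_distrib]
          exact Finset.sum_congr rfl fun j _ => by ring
        rw [h2, hc_eq] at h1
        linarith
      have hlim : (∑ j, g x j * av j) + f x * α ≤ μ * α := by
        by_contra hF
        push_neg at hF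
        set F : ℝ := (∑ j, g x j * av j) + f x * α with hFdef
        set K : ℝ := (∑ j, av j) + α with hK
        rcases le_or_gt 0 K with hK0 | hK0
        · have := hstep 1 one_pos
          nlinarith
        · have hεpos : 0 < (μ * α - F) / (2 * K) :=
            div_pos_of_neg_of_neg (by linarith) (by linarith)
          have h1 := hstep _ hεpos
          have h2 := div_two_mul' (a := μ * α - F) (ne_of_lt hK0)
          linarith
      -- divide by -α
      have hwsum : ∑ j, w j * g x j = (∑ j, g x j * av j) / α := by
        rw [Finset.sum_div]
        exact Finset.sum_congr rfl fun j _ => by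
          rw [hw]
          field_simp
      rw [hwsum]
      have hβ : 0 < -α := by linarith
      refine le_of_mul_le_mul_right ?_ hβ
      have hS : (∑ j, g x j * av j) / α * α = ∑ j, g x j * av j :=
        div_mul_cancel₀ _ (ne_of_lt hαneg)
      have hexp : (f x + (∑ j, g x j * av j) / α) * (-α)
          = -(f x * α) - ∑ j, g x j * av j := by
        rw [mul_neg, add_mul, hS]
        ring
      rw [hexp]
      linarith
    refine le_iSup_of_le w (le_iSup_of_le hwnonneg (le_iInf fun x => le_iInf fun hx => ?_))
    exact EReal.coe_le_coe_iff.mpr (hkey x hx)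
end

section
/- Trust region strong duality (Moré–Sorensen conditions): x* is a global minimizer of ½ xᵀAx − fᵀx subject to xᵀx ≤ δ² if there exists λ* ≥ 0 such that (A + λ*I)x* = f, A + λ*I is positive semidefinite, x*ᵀx* ≤ δ², and λ*(x*ᵀx* − δ²) = 0. -/
/-! `A + λ*I` is positive semidefinite and `x*` is a stationary point of the shifted objective
`q(x) + λ*/2 ‖x‖²`, so `x*` minimises it globally. On the ball,
`λ*/2 ‖x‖² ≤ λ*/2 δ² = λ*/2 ‖x*‖²` by complementary slackness, and subtracting the penalties
gives `q(x*) ≤ q(x)`. -/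

open Matrix

namespace Matrix

variable {ι R : Type*} [Fintype ι]

theorem IsSymm.sub_dotProduct_mulVec_sub [CommRing R] {B : Matrix ι ι R} (hB : B.IsSymm)
    (x y : ι → R) :
    (x - y) ⬝ᵥ B *ᵥ (x - y) = x ⬝ᵥ B *ᵥ x - 2 * (x ⬝ᵥ B *ᵥ y) + y ⬝ᵥ B *ᵥ y := by
  have hsymm : y ⬝ᵥ B *ᵥ x = x ⬝ᵥ B *ᵥ y := by
    rw [← dotProduct_transpose_mulVec, hB.eq]
  rw [mulVec_sub, sub_dotProduct, dotProduct_sub, dotProduct_sub, hsymm]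
  ring

end Matrix

variable {ι : Type*} [Fintype ι]

noncomputable def quadObjective (A : Matrix ι ι ℝ) (f x : ι → ℝ) : ℝ :=
  1 / 2 * (x ⬝ᵥ A *ᵥ x) - f ⬝ᵥ x

theorem quadObjective_add_smul_one [DecidableEq ι] (A : Matrix ι ι ℝ) (f x : ι → ℝ) (c : ℝ) :
    quadObjective (A + c • 1) f x = quadObjective A f x + c / 2 * (x ⬝ᵥ x) := by
  simp only [quadObjective, add_mulVec, smul_mulVec, one_mulVec, dotProduct_add,
    dotProduct_smul, smul_eq_mul]
  ring

theorem quadObjective_sub_of_mulVec_eq {B : Matrix ι ι ℝ} (hB : B.IsSymm) {f y : ι → ℝ}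
    (hy : B *ᵥ y = f) (x : ι → ℝ) :
    quadObjective B f x - quadObjective B f y = 1 / 2 * ((x - y) ⬝ᵥ B *ᵥ (x - y)) := by
  subst hy
  rw [quadObjective, quadObjective, hB.sub_dotProduct_mulVec_sub, dotProduct_comm (B *ᵥ y) x,
    dotProduct_comm (B *ᵥ y) y]
  ring

theorem Matrix.PosSemidef.quadObjective_le {B : Matrix ι ι ℝ} (hB : B.PosSemidef) {f y : ι → ℝ}
    (hy : B *ᵥ y = f) (x : ι → ℝ) : quadObjective B f y ≤ quadObjective B f x := by
  have hsq := hB.dotProduct_mulVec_nonneg (x - y)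
  rw [star_trivial] at hsq
  have := quadObjective_sub_of_mulVec_eq (isHermitian_iff_isSymm.mp hB.isHermitian) hy x
  linarith

theorem trust_region_strong_duality_general
    (n : ℕ)
    (A : Matrix (Fin n) (Fin n) ℝ)
    (f : Fin n → ℝ) (δ : ℝ)
    (xstar : Fin n → ℝ) (lamstar : ℝ)
    (hlam : 0 ≤ lamstar)
    (hstat : (A + lamstar • (1 : Matrix (Fin n) (Fin n) ℝ)).mulVec xstar = f)
    (hpsd : (A + lamstar • (1 : Matrix (Fin n) (Fin n) ℝ)).PosSemidef)
    (hcs : lamstar * (xstar ⬝ᵥ xstar - δ ^ 2) = 0) :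
    ∀ x : Fin n → ℝ, x ⬝ᵥ x ≤ δ ^ 2 →
      (1 / 2) * (xstar ⬝ᵥ A.mulVec xstar) - f ⬝ᵥ xstar
        ≤ (1 / 2) * (x ⬝ᵥ A.mulVec x) - f ⬝ᵥ x := by
  intro x hx
  have hmin := hpsd.quadObjective_le hstat x
  rw [quadObjective_add_smul_one, quadObjective_add_smul_one] at hmin
  have hpenalty := mul_le_mul_of_nonneg_left hx hlam
  unfold quadObjective at hmin
  linear_combination hmin + hpenalty / 2 - hcs / 2

/-- Moré–Sorensen conditions for the trust region problem: if `λ* ≥ 0`,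
`(A + λ*I) x* = f`, `A + λ*I` is positive semidefinite, `x*ᵀx* ≤ δ²` and
`λ* (x*ᵀx* − δ²) = 0`, then `x*` is a global minimizer of
`½ xᵀAx − fᵀx` over `{x : xᵀx ≤ δ²}`. -/
theorem trust_region_strong_duality
    (n : ℕ)
    (A : Matrix (Fin n) (Fin n) ℝ) (hAsymm : A.IsSymm)
    (f : Fin n → ℝ) (δ : ℝ) (hδ : 0 < δ)
    (xstar : Fin n → ℝ) (lamstar : ℝ)
    (hlam : 0 ≤ lamstar)
    (hstat : (A + lamstar • (1 : Matrix (Fin n) (Fin n) ℝ)).mulVec xstar = f)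
    (hpsd : (A + lamstar • (1 : Matrix (Fin n) (Fin n) ℝ)).PosSemidef)
    (hfeas : xstar ⬝ᵥ xstar ≤ δ ^ 2)
    (hcs : lamstar * (xstar ⬝ᵥ xstar - δ ^ 2) = 0) :
    ∀ x : Fin n → ℝ, x ⬝ᵥ x ≤ δ ^ 2 →
      (1 / 2) * (xstar ⬝ᵥ A.mulVec xstar) - f ⬝ᵥ xstar
        ≤ (1 / 2) * (x ⬝ᵥ A.mulVec x) - f ⬝ᵥ x :=
  trust_region_strong_duality_general n A f δ xstar lamstar hlam hstat hpsd hcs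
end

section
/- If A and B are symmetric n×n matrices and σ ≥ 0 is such that A + σB is positive definite, then every KKT point of the QCQP (i.e., x with (A + σB)x = f and σ(½xᵀBx − μ) = 0 and ½xᵀBx ≤ μ) satisfies P(x) = P^d(σ), where P(x) = ½xᵀAx − fᵀx and P^d(σ) = −½ fᵀ(A+σB)⁻¹f − μσ. -/
open Matrix

/-- KKT points of the QCQP have zero duality gap: if `σ ≥ 0`, `A + σB ≻ 0`,
`(A+σB)x = f`, `½ xᵀBx ≤ μ` and `σ(½ xᵀBx − μ) = 0`, then
`P(x) = ½ xᵀAx − fᵀx` equals `P^d(σ) = −½ fᵀ(A+σB)⁻¹f − μσ`. -/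
theorem qcqp_kkt_zero_gap
    (n : ℕ)
    (A B : Matrix (Fin n) (Fin n) ℝ) (hAsymm : A.IsSymm) (hBsymm : B.IsSymm)
    (f : Fin n → ℝ) (μ : ℝ)
    (σ : ℝ) (hσ : 0 ≤ σ) (hpd : (A + σ • B).PosDef)
    (x : Fin n → ℝ)
    (hstat : (A + σ • B).mulVec x = f)
    (hfeas : (1 / 2) * (x ⬝ᵥ B.mulVec x) ≤ μ)
    (hcs : σ * ((1 / 2) * (x ⬝ᵥ B.mulVec x) - μ) = 0) :
    (1 / 2) * (x ⬝ᵥ A.mulVec x) - f ⬝ᵥ x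
      = -(1 / 2) * (f ⬝ᵥ (A + σ • B)⁻¹.mulVec f) - μ * σ := by
  set M := A + σ • B with hM
  have hinv : Invertible M := hpd.isUnit.invertible
  have hxinv : M⁻¹.mulVec f = x := by
    rw [← hstat, Matrix.mulVec_mulVec, Matrix.nonsing_inv_mul _ (Matrix.isUnit_iff_isUnit_det _ |>.mp hpd.isUnit), Matrix.one_mulVec]
  have hfx : f ⬝ᵥ x = x ⬝ᵥ A.mulVec x + σ * (x ⬝ᵥ B.mulVec x) := by
    rw [← hstat, dotProduct_comm, hM, Matrix.add_mulVec, Matrix.smul_mulVec,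
      dotProduct_add, dotProduct_smul]
    simp [smul_eq_mul]
  have hff : f ⬝ᵥ M⁻¹.mulVec f = x ⬝ᵥ A.mulVec x + σ * (x ⬝ᵥ B.mulVec x) := by
    rw [hxinv, hfx]
  rw [hff, hfx]
  nlinarith [hcs]
end

section
/- Fermat–Torricelli / Vecten–Fasbender weak duality: for any triangle with vertices A, B, C in the plane, any point X, and any equilateral triangle circumscribed about triangle ABC (i.e., whose three sides pass through A, B, C respectively), the height of the equilateral triangle is at most |AX| + |BX| + |CX|. -/
/-!
Let `ω` be the area form of the plane and `u₁ = V₃ - V₂`, `u₂ = V₁ - V₃`, `u₃ = V₂ - V₁` the side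
vectors, all of length `s`. Since `u₁ + u₂ + u₃ = 0` and `ω u (x - p)` does not depend on the choice
of `p` on a line of direction `u`, the sum `ω u₁ (X - A) + ω u₂ (X - B) + ω u₃ (X - C)` is the
constant `ω u₁ (V₁ - V₂)`, whose absolute value is `s` times the height. Each summand is at most
`s` times the corresponding distance in absolute value, and dividing by `s` gives the claim.
-/

open Metric Module
open scoped RealInnerProductSpace

namespace Orientation

variable {V P : Type*} [NormedAddCommGroup V] [InnerProductSpace ℝ V] [MetricSpace P]
  [NormedAddTorsor V P] [Fact (finrank ℝ V = 2)] (o : Orientation ℝ V (Fin 2))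

local notation "ω" => o.areaForm

theorem areaForm_vsub_of_mem_affineSpan_pair {a b p : P} (hp : p ∈ line[ℝ, a, b]) (x : P) :
    ω (b -ᵥ a) (x -ᵥ p) = ω (b -ᵥ a) (x -ᵥ a) := by
  rw [← vsub_vadd p a, vadd_left_mem_affineSpan_pair] at hp
  obtain ⟨r, hr⟩ := hp
  rw [← vsub_sub_vsub_cancel_right x p a, ← hr, map_sub, map_smul, o.areaForm_apply_self,
    smul_zero, sub_zero]

theorem areaForm_add_areaForm_add_areaForm_of_mem_affineSpan_pair {a b c p q r : P}
    (hp : p ∈ line[ℝ, b, c]) (hq : q ∈ line[ℝ, c, a]) (hr : r ∈ line[ℝ, a, b]) (x : P) :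
    ω (c -ᵥ b) (x -ᵥ p) + ω (a -ᵥ c) (x -ᵥ q) + ω (b -ᵥ a) (x -ᵥ r) = ω (c -ᵥ b) (a -ᵥ b) := by
  rw [o.areaForm_vsub_of_mem_affineSpan_pair hp, o.areaForm_vsub_of_mem_affineSpan_pair hq,
    o.areaForm_vsub_of_mem_affineSpan_pair hr, ← vsub_sub_vsub_cancel_right a c b,
    ← vsub_sub_vsub_cancel_right x c b, ← vsub_sub_vsub_cancel_right x a b,
    ← vsub_sub_vsub_cancel_right b a b, vsub_self]
  simp only [map_sub, LinearMap.sub_apply, map_zero, LinearMap.zero_apply, o.areaForm_apply_self]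
  linear_combination -o.areaForm_swap (a -ᵥ b) (c -ᵥ b)

theorem norm_vsub_mul_infDist_affineSpan_pair_le (a b p : P) :
    ‖b -ᵥ a‖ * infDist p line[ℝ, a, b] ≤ |ω (b -ᵥ a) (p -ᵥ a)| := by
  set u := b -ᵥ a
  set t := ⟪p -ᵥ a, u⟫ / ‖u‖ ^ 2
  have hfoot : t • u +ᵥ a ∈ line[ℝ, a, b] := smul_vsub_vadd_mem_affineSpan_pair t a b
  have horth : ⟪u, p -ᵥ (t • u +ᵥ a)⟫ = 0 := by
    rw [vsub_vadd_eq_vsub_sub, inner_sub_right, inner_smul_right, real_inner_self_eq_norm_sq,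
      real_inner_comm]
    rcases eq_or_ne u 0 with hu | hu
    · simp [hu]
    · rw [div_mul_cancel₀ _ (by positivity), sub_self]
  calc ‖u‖ * infDist p line[ℝ, a, b] ≤ ‖u‖ * dist p (t • u +ᵥ a) := by
        gcongr; exact infDist_le_dist_of_mem hfoot
    _ = |ω u (p -ᵥ (t • u +ᵥ a))| := by rw [o.abs_areaForm_of_orthogonal horth, dist_eq_norm_vsub]
    _ = |ω u (p -ᵥ a)| := by rw [o.areaForm_vsub_of_mem_affineSpan_pair hfoot]

theorem abs_areaForm_vsub_le (a b p x : P) : |ω (b -ᵥ a) (x -ᵥ p)| ≤ dist b a * dist p x := by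
  rw [dist_eq_norm_vsub V b a, dist_comm, dist_eq_norm_vsub V x p]
  exact o.abs_areaForm_le _ _

end Orientation

open EuclideanSpace in
theorem fermat_torricelli_weak_duality_general
    (A B C X V₁ V₂ V₃ : EuclideanSpace ℝ (Fin 2))
    (hside : 0 < dist V₁ V₂)
    (h12 : dist V₁ V₂ = dist V₂ V₃) (h23 : dist V₂ V₃ = dist V₃ V₁)
    (hA : A ∈ affineSpan ℝ ({V₂, V₃} : Set (EuclideanSpace ℝ (Fin 2))))
    (hB : B ∈ affineSpan ℝ ({V₃, V₁} : Set (EuclideanSpace ℝ (Fin 2))))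
    (hC : C ∈ affineSpan ℝ ({V₁, V₂} : Set (EuclideanSpace ℝ (Fin 2)))) :
    infDist V₁ (affineSpan ℝ ({V₂, V₃} : Set (EuclideanSpace ℝ (Fin 2))))
      ≤ dist A X + dist B X + dist C X := by
  let o := (EuclideanSpace.basisFun (Fin 2) ℝ).toBasis.orientation
  set s := dist V₁ V₂
  have hs₁ : dist V₃ V₂ = s := by rw [dist_comm, h12]
  have hs₂ : dist V₁ V₃ = s := by rw [dist_comm, h12, h23]
  have hs₃ : dist V₂ V₁ = s := dist_comm _ _
  refine le_of_mul_le_mul_left ?_ hside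
  calc s * infDist V₁ line[ℝ, V₂, V₃] ≤ |o.areaForm (V₃ -ᵥ V₂) (V₁ -ᵥ V₂)| := by
        rw [← hs₁, dist_eq_norm_vsub]; exact o.norm_vsub_mul_infDist_affineSpan_pair_le V₂ V₃ V₁
    _ = |o.areaForm (V₃ -ᵥ V₂) (X -ᵥ A) + o.areaForm (V₁ -ᵥ V₃) (X -ᵥ B)
          + o.areaForm (V₂ -ᵥ V₁) (X -ᵥ C)| := by
        rw [o.areaForm_add_areaForm_add_areaForm_of_mem_affineSpan_pair hA hB hC]
    _ ≤ |o.areaForm (V₃ -ᵥ V₂) (X -ᵥ A)| + |o.areaForm (V₁ -ᵥ V₃) (X -ᵥ B)|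
          + |o.areaForm (V₂ -ᵥ V₁) (X -ᵥ C)| := abs_add_three _ _ _
    _ ≤ s * dist A X + s * dist B X + s * dist C X := by
        have hA' := o.abs_areaForm_vsub_le V₂ V₃ A X
        have hB' := o.abs_areaForm_vsub_le V₃ V₁ B X
        have hC' := o.abs_areaForm_vsub_le V₁ V₂ C X
        rw [hs₁] at hA'; rw [hs₂] at hB'; rw [hs₃] at hC'
        linarith
    _ = s * (dist A X + dist B X + dist C X) := by ring

/-- Vecten–Fasbender / Fermat–Torricelli weak duality: if an equilateral
triangle `V₁V₂V₃` is circumscribed about the triangle `ABC` (the side line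
`V₂V₃` passes through `A`, `V₃V₁` through `B`, `V₁V₂` through `C`, and
`A, B, C` lie in the triangle `V₁V₂V₃`), then its height is at most
`|AX| + |BX| + |CX|` for every point `X` of the plane. -/
theorem fermat_torricelli_weak_duality
    (A B C X V₁ V₂ V₃ : EuclideanSpace ℝ (Fin 2))
    (hside : 0 < dist V₁ V₂)
    (h12 : dist V₁ V₂ = dist V₂ V₃) (h23 : dist V₂ V₃ = dist V₃ V₁)
    (hA : A ∈ affineSpan ℝ ({V₂, V₃} : Set (EuclideanSpace ℝ (Fin 2))))
    (hB : B ∈ affineSpan ℝ ({V₃, V₁} : Set (EuclideanSpace ℝ (Fin 2))))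
    (hC : C ∈ affineSpan ℝ ({V₁, V₂} : Set (EuclideanSpace ℝ (Fin 2))))
    (hAin : A ∈ convexHull ℝ ({V₁, V₂, V₃} : Set (EuclideanSpace ℝ (Fin 2))))
    (hBin : B ∈ convexHull ℝ ({V₁, V₂, V₃} : Set (EuclideanSpace ℝ (Fin 2))))
    (hCin : C ∈ convexHull ℝ ({V₁, V₂, V₃} : Set (EuclideanSpace ℝ (Fin 2)))) :
    infDist V₁ (affineSpan ℝ ({V₂, V₃} : Set (EuclideanSpace ℝ (Fin 2))))
      ≤ dist A X + dist B X + dist C X :=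
  fermat_torricelli_weak_duality_general A B C X V₁ V₂ V₃ hside h12 h23 hA hB hC
end
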